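/- For the 1-Lipschitz function f_ε : [0, n] → ℝ defined by f_ε(x) = n^{1−2ε} − x for x ≤ m := n^{1−2ε} + a·n^{1−4ε}, and f_ε(x) = −a·n^{1−4ε} for x ≥ m (with suitable a = 1/2 + o(1) making the mean ∫₀^n f_ε dx = 0, and 0 < ε < 1/4, n large): the variance σ := √((1/n)∫₀^n f_ε² dx) satisfies σ = Θ(n^{1−3ε}), while f_ε(x) ∈ [−σ/4, σ/4] for all x ≥ n^{1−2ε} and n sufficiently large. -/

import Mathlib

/-!
Write `p = n^(1-2ε)`, `r = n^(1-3ε)`, `q = n^(1-4ε)`, so that `p² = n q` and `p³ = n r²`.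
The function is the ramp `max (p - x) (-a q)`. Since `p² = n q`, its mean vanishes exactly when
`q a² - 2 (n - p) a + n = 0`, and as `p, q = o(n)` this quadratic changes sign on
`[1/2, 1/2 + δ]`. The integral of the square is `(p³ + (aq)³)/3 + (n - p - aq)(aq)²`, dominated by
`p³/3 = n r²/3`, so `σ ≍ r`. Past `p` the ramp lies in `[-aq, 0]`, and `aq ≤ q = r / n^ε` is
small next to `σ`.
-/

open MeasureTheory Set Filter

def ramp (p c : ℝ) (x : ℝ) : ℝ := max (p - x) (-c)

section Ramp

variable (p c : ℝ)

theorem ite_le_add_eq_ramp (x : ℝ) : (if x ≤ p + c then p - x else -c) = ramp p c x := by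
  unfold ramp
  split_ifs with h
  · exact (max_eq_left (by linarith)).symm
  · exact (max_eq_right (by linarith)).symm

theorem lipschitzWith_ramp : LipschitzWith 1 (ramp p c) :=
  ((LipschitzWith.const p).sub LipschitzWith.id |>.max_const (-c)).weaken (by norm_num)

theorem continuous_ramp : Continuous (ramp p c) := (lipschitzWith_ramp p c).continuous

variable {p c}

theorem abs_ramp_le (hc : 0 ≤ c) {x : ℝ} (hx : p ≤ x) : |ramp p c x| ≤ c :=
  abs_le.2 ⟨le_max_right _ _, max_le (by linarith) (by linarith)⟩

theorem setIntegral_Icc_comp_ramp {φ : ℝ → ℝ} (hφ : Continuous φ) {n : ℝ} (h0 : 0 ≤ p + c)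
    (hn : p + c ≤ n) :
    ∫ x in Icc 0 n, φ (ramp p c x) = (∫ y in -c..p, φ y) + (n - (p + c)) * φ (-c) := by
  have hcont : Continuous fun x => φ (ramp p c x) := hφ.comp (continuous_ramp p c)
  rw [integral_Icc_eq_integral_Ioc, ← intervalIntegral.integral_of_le (h0.trans hn),
    ← intervalIntegral.integral_add_adjacent_intervals (b := p + c)
      (hcont.intervalIntegrable _ _) (hcont.intervalIntegrable _ _)]
  congr 1
  · rw [intervalIntegral.integral_congr (g := fun x => φ (p - x)),
      intervalIntegral.integral_comp_sub_left (fun y => φ y) p]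
    · ring_nf
    · intro x hx
      rw [uIcc_of_le h0] at hx
      simp only [ramp, max_eq_left (show -c ≤ p - x by linarith [hx.2])]
  · rw [intervalIntegral.integral_congr (g := fun _ => φ (-c)), intervalIntegral.integral_const,
      smul_eq_mul]
    intro x hx
    rw [uIcc_of_le hn] at hx
    simp only [ramp, max_eq_right (show p - x ≤ -c by linarith [hx.1])]

theorem setIntegral_Icc_ramp {n : ℝ} (h0 : 0 ≤ p + c) (hn : p + c ≤ n) :
    ∫ x in Icc 0 n, ramp p c x = (p ^ 2 - c ^ 2) / 2 - (n - (p + c)) * c := by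
  refine (setIntegral_Icc_comp_ramp (φ := id) continuous_id h0 hn).trans ?_
  simp only [id, integral_id]
  ring

theorem setIntegral_Icc_ramp_sq {n : ℝ} (h0 : 0 ≤ p + c) (hn : p + c ≤ n) :
    ∫ x in Icc 0 n, ramp p c x ^ 2 = (p ^ 3 + c ^ 3) / 3 + (n - (p + c)) * c ^ 2 := by
  rw [setIntegral_Icc_comp_ramp (φ := (· ^ 2)) (continuous_pow 2) h0 hn]
  simp only [integral_pow]
  ring

end Ramp

theorem exists_quadratic_root_mem_Icc_half {n p q δ : ℝ} (hp : 0 ≤ p) (hq : 0 ≤ q) (hδ : 0 ≤ δ)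
    (hδ' : δ ≤ 1 / 2) (hsmall : q + 2 * p ≤ 2 * δ * n) :
    ∃ a ∈ Icc (1 / 2) (1 / 2 + δ), q * a ^ 2 - 2 * (n - p) * a + n = 0 := by
  have hcont : ContinuousOn (fun a => q * a ^ 2 - 2 * (n - p) * a + n) (Icc (1 / 2) (1 / 2 + δ)) :=
    by fun_prop
  have hleft : 0 ≤ q * (1 / 2) ^ 2 - 2 * (n - p) * (1 / 2) + n := by nlinarith
  have hright : q * (1 / 2 + δ) ^ 2 - 2 * (n - p) * (1 / 2 + δ) + n ≤ 0 := by
    nlinarith [mul_le_mul_of_nonneg_left (show (1 / 2 + δ) ^ 2 ≤ 1 by nlinarith) hq]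
  exact intermediate_value_Icc' (by linarith) hcont ⟨hright, hleft⟩

theorem exists_quadratic_root_mem_Icc_half_of_scales {n E p q r η : ℝ} (hE : 1 ≤ E)
    (hη : 0 < η) (hη' : η ≤ 1 / 2) (hEη : 3 ≤ E * (2 * η)) (hq : 0 ≤ q) (hqr : q * E = r)
    (hrp : r * E = p) (hpn : p * E ^ 2 = n) :
    ∃ a ∈ Icc (1 / 2) (1 / 2 + η), q * a ^ 2 - 2 * (n - p) * a + n = 0 := by
  have hp : 0 ≤ p := by rw [← hrp, ← hqr]; positivity
  have hqp : q ≤ p := by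
    rw [← hrp, ← hqr]; nlinarith [mul_le_mul_of_nonneg_left (by nlinarith : 1 ≤ E * E) hq]
  refine exists_quadratic_root_mem_Icc_half hp hq hη.le hη' ?_
  rw [← hpn]
  nlinarith [mul_le_mul_of_nonneg_left hEη (mul_nonneg hp (by positivity : (0 : ℝ) ≤ E)),
    mul_le_mul_of_nonneg_left hE hp]

theorem ramp_rms_bounds {n p c r : ℝ} (hn : 0 < n) (hr : 0 ≤ r) (hp3 : p ^ 3 = n * r ^ 2)
    (hc : 0 ≤ c) (hcr : 8 * c ≤ r) (hcn : c ≤ n) (hpc0 : 0 ≤ p + c) (hpc : p + c ≤ n) :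
    r / 2 ≤ √((1 / n) * ∫ x in Icc 0 n, ramp p c x ^ 2) ∧
      √((1 / n) * ∫ x in Icc 0 n, ramp p c x ^ 2) ≤ r := by
  rw [setIntegral_Icc_ramp_sq hpc0 hpc]
  have hc2 : 64 * c ^ 2 ≤ r ^ 2 := by nlinarith
  have hc3 : c ^ 3 ≤ n * c ^ 2 := by nlinarith [sq_nonneg c]
  have hlower : n * (r / 2) ^ 2 ≤ (p ^ 3 + c ^ 3) / 3 + (n - (p + c)) * c ^ 2 := by
    nlinarith [pow_nonneg hc 3, mul_nonneg (sub_nonneg.2 hpc) (sq_nonneg c),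
      mul_nonneg hn.le (sq_nonneg r)]
  have hupper : (p ^ 3 + c ^ 3) / 3 + (n - (p + c)) * c ^ 2 ≤ n * r ^ 2 := by
    nlinarith [mul_le_mul_of_nonneg_left hc2 hn.le, mul_nonneg hpc0 (sq_nonneg c),
      mul_nonneg hn.le (sq_nonneg r)]
  rw [one_div_mul_eq_div]
  exact ⟨Real.le_sqrt_of_sq_le ((le_div_iff₀' hn).2 hlower),
    Real.sqrt_le_iff.2 ⟨hr, (div_le_iff₀' hn).2 hupper⟩⟩

theorem ramp_counterexample_properties {n E p q r a σ : ℝ} (hn : 0 < n) (hE : 8 ≤ E) (hq : 0 ≤ q)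
    (hqr : q * E = r) (hrp : r * E = p) (hpn : p * E ^ 2 = n) (ha : a ∈ Icc 0 1)
    (hroot : q * a ^ 2 - 2 * (n - p) * a + n = 0)
    (hσ : σ = √((1 / n) * ∫ x in Icc 0 n, ramp p (a * q) x ^ 2)) :
    LipschitzOnWith 1 (ramp p (a * q)) (Icc 0 n) ∧ ∫ x in Icc 0 n, ramp p (a * q) x = 0 ∧
      r / 2 ≤ σ ∧ σ ≤ r ∧ ∀ x ∈ Icc p n, |ramp p (a * q) x| ≤ σ / 4 := by
  have hp2 : p ^ 2 = n * q := by rw [← hpn, ← hrp, ← hqr]; ring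
  have hp3 : p ^ 3 = n * r ^ 2 := by rw [← hpn, ← hrp]; ring
  have h8q : 8 * q ≤ r := by rw [← hqr]; nlinarith
  have hr : 0 ≤ r := by linarith
  have h8r : 8 * r ≤ p := by rw [← hrp]; nlinarith
  have h2p : 2 * p ≤ n := by rw [← hpn]; nlinarith
  have hc0 : 0 ≤ a * q := mul_nonneg ha.1 hq
  have hcq : a * q ≤ q := mul_le_of_le_one_left hq ha.2
  have hpc0 : 0 ≤ p + a * q := by linarith
  have hpc : p + a * q ≤ n := by linarith
  obtain ⟨hσl, hσu⟩ :=
    ramp_rms_bounds hn hr hp3 hc0 (by linarith) (by linarith) hpc0 hpc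
  rw [← hσ] at hσl hσu
  refine ⟨(lipschitzWith_ramp _ _).lipschitzOnWith, ?_, hσl, hσu,
    fun x hx => (abs_ramp_le hc0 hx.1).trans (by linarith)⟩
  rw [setIntegral_Icc_ramp hpc0 hpc]
  linear_combination (q / 2) * hroot + hp2 / 2

theorem stmt_17_general (ε : ℝ) (hε0 : 0 < ε) :
    ∃ c₁ c₂ : ℝ, 0 < c₁ ∧ 0 < c₂ ∧
      ∀ δ : ℝ, 0 < δ → ∃ n₀ : ℝ, 1 ≤ n₀ ∧
        ∀ n : ℝ, n₀ ≤ n → ∃ a : ℝ, |a - 1 / 2| ≤ δ ∧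
          ∀ (m : ℝ), m = n ^ (1 - 2 * ε) + a * n ^ (1 - 4 * ε) →
          ∀ f : ℝ → ℝ,
            (f = fun x => if x ≤ m then n ^ (1 - 2 * ε) - x else -a * n ^ (1 - 4 * ε)) →
          ∀ σ : ℝ, σ = Real.sqrt ((1 / n) * ∫ x in Set.Icc (0 : ℝ) n, f x ^ 2) →
            LipschitzOnWith 1 f (Set.Icc (0 : ℝ) n) ∧
            (∫ x in Set.Icc (0 : ℝ) n, f x) = 0 ∧
            c₁ * n ^ (1 - 3 * ε) ≤ σ ∧ σ ≤ c₂ * n ^ (1 - 3 * ε) ∧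
            ∀ x ∈ Set.Icc (n ^ (1 - 2 * ε)) n, |f x| ≤ σ / 4 := by
  refine ⟨1 / 2, 1, by norm_num, by norm_num, fun δ hδ => ?_⟩
  set η := min δ (1 / 2)
  have hη : 0 < η := lt_min hδ (by norm_num)
  obtain ⟨N, hN⟩ := eventually_atTop.1
    ((tendsto_rpow_atTop hε0).eventually_ge_atTop (max 8 (3 / (2 * η))))
  refine ⟨max 1 N, le_max_left _ _, fun n hn => ?_⟩
  have hn0 : 0 < n := one_pos.trans_le (le_of_max_le_left hn)
  obtain ⟨hE8, hEη⟩ := max_le_iff.1 (hN n (le_of_max_le_right hn))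
  set E := n ^ ε
  set p := n ^ (1 - 2 * ε)
  set q := n ^ (1 - 4 * ε)
  set r := n ^ (1 - 3 * ε)
  have hqr : q * E = r := by rw [← Real.rpow_add hn0]; congr 1; ring
  have hrp : r * E = p := by rw [← Real.rpow_add hn0]; congr 1; ring
  have hpn : p * E ^ 2 = n := by
    rw [sq, ← mul_assoc, ← Real.rpow_add hn0, ← Real.rpow_add hn0,
      show 1 - 2 * ε + ε + ε = 1 by ring, Real.rpow_one]
  have hq0 : 0 ≤ q := by positivity
  obtain ⟨a, ha, hroot⟩ := exists_quadratic_root_mem_Icc_half_of_scales (by linarith) hη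
    (min_le_right _ _) ((div_le_iff₀ (by positivity)).1 hEη) hq0 hqr hrp hpn
  refine ⟨a, abs_le.2 ⟨by linarith [ha.1], by linarith [ha.2, min_le_left δ (1 / 2)]⟩, ?_⟩
  rintro m rfl f rfl σ hσ
  have hf : (fun x => if x ≤ p + a * q then p - x else -a * q) = ramp p (a * q) :=
    funext fun x => by rw [neg_mul]; exact ite_le_add_eq_ramp _ _ x
  rw [hf] at hσ ⊢
  obtain ⟨hlip, hmean, hσl, hσu, hflat⟩ := ramp_counterexample_properties hn0 hE8 hq0 hqr hrp hpn
    ⟨by linarith [ha.1], by linarith [ha.2, min_le_right δ (1 / 2)]⟩ hroot hσ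
  exact ⟨hlip, hmean, by linarith, by linarith, hflat⟩

theorem stmt_17 (ε : ℝ) (hε0 : 0 < ε) (hε : ε < 1 / 4) :
    ∃ c₁ c₂ : ℝ, 0 < c₁ ∧ 0 < c₂ ∧
      ∀ δ : ℝ, 0 < δ → ∃ n₀ : ℝ, 1 ≤ n₀ ∧
        ∀ n : ℝ, n₀ ≤ n → ∃ a : ℝ, |a - 1 / 2| ≤ δ ∧
          ∀ (m : ℝ), m = n ^ (1 - 2 * ε) + a * n ^ (1 - 4 * ε) →
          ∀ f : ℝ → ℝ,
            (f = fun x => if x ≤ m then n ^ (1 - 2 * ε) - x else -a * n ^ (1 - 4 * ε)) →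
          ∀ σ : ℝ, σ = Real.sqrt ((1 / n) * ∫ x in Set.Icc (0 : ℝ) n, f x ^ 2) →
            LipschitzOnWith 1 f (Set.Icc (0 : ℝ) n) ∧
            (∫ x in Set.Icc (0 : ℝ) n, f x) = 0 ∧
            c₁ * n ^ (1 - 3 * ε) ≤ σ ∧ σ ≤ c₂ * n ^ (1 - 3 * ε) ∧
            ∀ x ∈ Set.Icc (n ^ (1 - 2 * ε)) n, |f x| ≤ σ / 4 :=
  stmt_17_general ε hε0
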